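/- If T is a tree of order n ≥ 4 of the form T = T₁ ∘ K₁ (the corona of a tree T₁ with K₁), then the fair domatic number of T equals 2. -/

import Mathlib

open SimpleGraph

/-- `D` is a fair dominating set of `G`: it is a dominating set and there is some
`k ≥ 1` such that every vertex outside `D` has exactly `k` neighbors in `D`. -/
def IsFairDomSet {V : Type*} (G : SimpleGraph V) (D : Set V) : Prop :=
  (∀ v ∉ D, ∃ u ∈ D, G.Adj v u) ∧
  ∃ k : ℕ, 1 ≤ k ∧ ∀ v ∉ D, (G.neighborSet v ∩ D).ncard = k

/-- A fair coalition partition of `G`: a partition of the vertex set into nonempty parts,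
each of which is either a singleton fair dominating set, or is not a fair dominating set
but forms a fair coalition with another part that is not a fair dominating set. -/
def IsFairCoalitionPartition {V : Type*} (G : SimpleGraph V) (P : Finset (Set V)) : Prop :=
  (∀ A ∈ P, A.Nonempty) ∧
  (P : Set (Set V)).PairwiseDisjoint id ∧
  ⋃₀ (P : Set (Set V)) = Set.univ ∧
  ∀ A ∈ P, ((∃ v, A = {v}) ∧ IsFairDomSet G A) ∨
    (¬ IsFairDomSet G A ∧ ∃ B ∈ P, B ≠ A ∧ ¬ IsFairDomSet G B ∧ IsFairDomSet G (A ∪ B))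

/-- The fair coalition number of `G`: the maximum number of parts in a fair
coalition partition of `G`. -/
noncomputable def fairCoalitionNumber {V : Type*} (G : SimpleGraph V) : ℕ :=
  sSup {n | ∃ P : Finset (Set V), IsFairCoalitionPartition G P ∧ P.card = n}

/-- A fair domatic partition of `G`: a partition of the vertex set into fair dominating sets. -/
def IsFairDomaticPartition {V : Type*} (G : SimpleGraph V) (P : Finset (Set V)) : Prop :=
  (∀ A ∈ P, A.Nonempty) ∧
  (P : Set (Set V)).PairwiseDisjoint id ∧
  ⋃₀ (P : Set (Set V)) = Set.univ ∧
  ∀ A ∈ P, IsFairDomSet G A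

/-- The fair domatic number of `G`. -/
noncomputable def fairDomaticNumber {V : Type*} (G : SimpleGraph V) : ℕ :=
  sSup {n | ∃ P : Finset (Set V), IsFairDomaticPartition G P ∧ P.card = n}

/-- The corona `G ∘ K₁`: attach one new pendant vertex to each vertex of `G`.
Vertex `(u, false)` is a copy of `u ∈ V(G)`; `(u, true)` is its pendant leaf. -/
def corona {V : Type*} (G : SimpleGraph V) : SimpleGraph (V × Bool) :=
  SimpleGraph.fromRel (fun a b =>
    (a.2 = false ∧ b.2 = false ∧ G.Adj a.1 b.1) ∨ (a.1 = b.1 ∧ a.2 = false ∧ b.2 = true))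


section FairDomination

variable {V : Type*} {G : SimpleGraph V}

lemma isFairDomSet_of_ncard_eq_one {D : Set V}
    (h : ∀ v ∉ D, (G.neighborSet v ∩ D).ncard = 1) : IsFairDomSet G D := by
  refine ⟨fun v hv => ?_, 1, le_rfl, h⟩
  obtain ⟨u, hu⟩ := Set.ncard_eq_one.mp (h v hv)
  have hu' : u ∈ G.neighborSet v ∩ D := hu ▸ Set.mem_singleton u
  exact ⟨u, hu'.2, hu'.1⟩

lemma isFairDomaticPartition_pair {D : Set V} (hD : D.Nonempty) (hDc : Dᶜ.Nonempty)
    (hfD : IsFairDomSet G D) (hfDc : IsFairDomSet G Dᶜ) :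
    IsFairDomaticPartition G {D, Dᶜ} := by
  refine ⟨?_, ?_, ?_, ?_⟩
  · simp only [Finset.mem_insert, Finset.mem_singleton, forall_eq_or_imp, forall_eq]
    exact ⟨hD, hDc⟩
  · rw [Finset.coe_pair]
    exact Set.pairwise_pair.mpr fun _ => ⟨disjoint_compl_right, disjoint_compl_left⟩
  · simp [Set.union_compl_self]
  · simp only [Finset.mem_insert, Finset.mem_singleton, forall_eq_or_imp, forall_eq]
    exact ⟨hfD, hfDc⟩

open Classical in
lemma card_filter_mem_le_one {P : Finset (Set V)} (hP : (P : Set (Set V)).PairwiseDisjoint id)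
    (x : V) : (P.filter (x ∈ ·)).card ≤ 1 := by
  refine Finset.card_le_one.mpr fun A hA B hB => ?_
  rw [Finset.mem_filter] at hA hB
  by_contra hAB
  exact Set.disjoint_left.mp (hP hA.1 hB.1 hAB) hA.2 hB.2

/-- A part avoiding a vertex of degree one must dominate it, hence contain its only neighbour;
so every part meets `{v, w}`, and disjoint parts can do so at most twice. -/
lemma IsFairDomaticPartition.card_le_two_of_neighborSet_eq_singleton {P : Finset (Set V)}
    (hP : IsFairDomaticPartition G P) {v w : V} (hvw : G.neighborSet v = {w}) :
    P.card ≤ 2 := by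
  classical
  obtain ⟨-, hdisj, -, hfair⟩ := hP
  have hcover : P ⊆ P.filter (v ∈ ·) ∪ P.filter (w ∈ ·) := by
    intro A hA
    rw [← Finset.filter_or, Finset.mem_filter]
    refine ⟨hA, or_iff_not_imp_left.mpr fun hv => ?_⟩
    obtain ⟨u, hu, hvu⟩ := (hfair A hA).1 v hv
    have huw : u = w := by rw [← Set.mem_singleton_iff, ← hvw]; exact hvu
    exact huw ▸ hu
  calc P.card ≤ (P.filter (v ∈ ·)).card + (P.filter (w ∈ ·)).card :=
        (Finset.card_le_card hcover).trans (Finset.card_union_le _ _)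
    _ ≤ 2 := add_le_add (card_filter_mem_le_one hdisj v) (card_filter_mem_le_one hdisj w)

end FairDomination

section Corona

variable {V : Type*} (G : SimpleGraph V)

lemma corona_neighborSet_leaf (u : V) : (corona G).neighborSet (u, true) = {(u, false)} := by
  ext ⟨v, c⟩
  simp only [mem_neighborSet, corona, fromRel_adj, Set.mem_singleton_iff, Prod.mk.injEq]
  aesop

lemma corona_neighborSet_inter_leaves (u : V) :
    (corona G).neighborSet (u, false) ∩ {p | p.2 = true} = {(u, true)} := by
  ext ⟨v, c⟩
  simp only [Set.mem_inter_iff, mem_neighborSet, corona, fromRel_adj, Set.mem_ofPred_eq,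
    Set.mem_singleton_iff, Prod.mk.injEq]
  aesop

lemma corona_neighborSet_inter_base (u : V) :
    (corona G).neighborSet (u, true) ∩ {p | p.2 = false} = {(u, false)} := by
  rw [corona_neighborSet_leaf]
  exact Set.inter_eq_left.mpr (Set.singleton_subset_iff.mpr rfl)

lemma isFairDomSet_corona_base : IsFairDomSet (corona G) {p | p.2 = false} := by
  refine isFairDomSet_of_ncard_eq_one fun ⟨u, c⟩ hc => ?_
  obtain rfl : c = true := by simpa using hc
  rw [corona_neighborSet_inter_base, Set.ncard_singleton]

lemma isFairDomSet_corona_leaves : IsFairDomSet (corona G) {p | p.2 = false}ᶜ := by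
  refine isFairDomSet_of_ncard_eq_one fun ⟨u, c⟩ hc => ?_
  obtain rfl : c = false := by simpa using hc
  have hleaves : {p : V × Bool | p.2 = false}ᶜ = {p | p.2 = true} := by ext; simp
  rw [hleaves, corona_neighborSet_inter_leaves, Set.ncard_singleton]

lemma isFairDomaticPartition_corona (u : V) :
    IsFairDomaticPartition (corona G) {{p | p.2 = false}, {p | p.2 = false}ᶜ} :=
  isFairDomaticPartition_pair ⟨(u, false), rfl⟩ ⟨(u, true), by simp⟩
    (isFairDomSet_corona_base G) (isFairDomSet_corona_leaves G)

lemma fairDomaticNumber_corona [Nonempty V] : fairDomaticNumber (corona G) = 2 := by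
  obtain ⟨u⟩ := ‹Nonempty V›
  refine IsGreatest.csSup_eq ⟨⟨_, isFairDomaticPartition_corona G u, ?_⟩, ?_⟩
  · refine Finset.card_pair fun h => ?_
    have hu : (u, false) ∈ {p : V × Bool | p.2 = false}ᶜ := h ▸ rfl
    simp at hu
  · rintro n ⟨P, hP, rfl⟩
    exact hP.card_le_two_of_neighborSet_eq_singleton (corona_neighborSet_leaf G u)

end Corona

theorem stmt_10_general {V : Type*} (T₁ : SimpleGraph V) (hT₁ : T₁.IsTree) :
    fairDomaticNumber (corona T₁) = 2 :=
  have := hT₁.connected.nonempty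
  fairDomaticNumber_corona T₁

theorem stmt_10 {V : Type*} [Fintype V] (T₁ : SimpleGraph V) (hT₁ : T₁.IsTree)
    (hn : 4 ≤ Fintype.card (V × Bool)) :
    fairDomaticNumber (corona T₁) = 2 :=
  stmt_10_general T₁ hT₁
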